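/- Let A ∈ ℝ^{n×n} be symmetric, fix a partition of {1,…,n} into nonempty clusters S_1,…,S_r with sizes m_k, let β ∈ ℝ, and let Λ be the matrix of the dual construction. Then for every vector u ∈ ℝ^n satisfying Σ_{i∈S_k} u_i = 0 for every cluster k, one has uᵀΛu = β·‖u‖² − uᵀAu. -/

import Mathlib

/-!
Λ differs from `βI − A` by a matrix whose `(i, j)` entry depends on `i` only through its cluster,
plus one whose `(i, j)` entry depends on `j` only through its cluster. The quadratic form of
either correction vanishes on vectors whose entries sum to zero over every cluster.
-/

open Matrix BigOperators

noncomputable section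

/-- The cluster `S_k` of a cluster assignment `z`. -/
def cluster {n r : ℕ} (z : Fin n → Fin r) (k : Fin r) : Finset (Fin n) :=
  Finset.univ.filter (fun i => z i = k)

/-- The cluster size `m_k`. -/
def csize {n r : ℕ} (z : Fin n → Fin r) (k : Fin r) : ℕ := (cluster z k).card

/-- `d_u(S_k) = Σ_{j ∈ S_k} A_{uj}`, the number of edges from node `u` to cluster `k`. -/
def deg {n r : ℕ} (A : Matrix (Fin n) (Fin n) ℝ) (z : Fin n → Fin r)
    (u : Fin n) (k : Fin r) : ℝ :=
  ∑ j ∈ cluster z k, A u j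

/-- `𝟙ᵀ A_{S_k S_ℓ} 𝟙 = Σ_{i ∈ S_k} Σ_{j ∈ S_ℓ} A_{ij}`. -/
def blocksum {n r : ℕ} (A : Matrix (Fin n) (Fin n) ℝ) (z : Fin n → Fin r)
    (k ℓ : Fin r) : ℝ :=
  ∑ i ∈ cluster z k, ∑ j ∈ cluster z ℓ, A i j

/-- `φ_k = −(1/2)·(β + 𝟙ᵀA_{S_k}𝟙/m_k)` of the dual construction. -/
def phi {n r : ℕ} (A : Matrix (Fin n) (Fin n) ℝ) (z : Fin n → Fin r) (β : ℝ)
    (k : Fin r) : ℝ :=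
  -(1 / 2) * (β + blocksum A z k k / (csize z k : ℝ))

/-- The dual vector `α`, defined blockwise by `α_{S_k} = (A_{S_k}𝟙 + φ_k·𝟙)/m_k`;
its entry at a node `u ∈ S_k` is `(d_u(S_k) + φ_k)/m_k`. -/
def alpha {n r : ℕ} (A : Matrix (Fin n) (Fin n) ℝ) (z : Fin n → Fin r) (β : ℝ)
    (u : Fin n) : ℝ :=
  (deg A z u (z u) + phi A z β (z u)) / (csize z (z u) : ℝ)

/-- The dual matrix `Λ`, defined blockwise by
`Λ_{S_k} = −A_{S_k} + 𝟙α_{S_k}ᵀ + α_{S_k}𝟙ᵀ + βI` and, for `k ≠ ℓ`,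
`Λ_{S_kS_ℓ} = −(I − E_{m_k}/m_k)·A_{S_kS_ℓ}·(I − E_{m_ℓ}/m_ℓ)`. -/
def Lam {n r : ℕ} (A : Matrix (Fin n) (Fin n) ℝ) (z : Fin n → Fin r) (β : ℝ) :
    Matrix (Fin n) (Fin n) ℝ :=
  Matrix.of fun u v =>
    if z u = z v then
      -A u v + alpha A z β u + alpha A z β v + (if u = v then β else 0)
    else
      -(A u v - (∑ i ∈ cluster z (z u), A i v) / (csize z (z u) : ℝ)
          - (∑ j ∈ cluster z (z v), A u j) / (csize z (z v) : ℝ)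
          + blocksum A z (z u) (z v) / ((csize z (z u) : ℝ) * (csize z (z v) : ℝ)))

/-- The dual matrix `Γ`, defined blockwise by `Γ_{S_k} = 0` and, for `k ≠ ℓ`,
`Γ_{S_kS_ℓ} = −A_{S_kS_ℓ} − Λ_{S_kS_ℓ} + 𝟙α_{S_ℓ}ᵀ + α_{S_k}𝟙ᵀ`. -/
def Gam {n r : ℕ} (A : Matrix (Fin n) (Fin n) ℝ) (z : Fin n → Fin r) (β : ℝ) :
    Matrix (Fin n) (Fin n) ℝ :=
  Matrix.of fun u v =>
    if z u = z v then 0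
    else -A u v - Lam A z β u v + alpha A z β v + alpha A z β u

section FiberwiseZero

variable {ι κ R : Type*} [Fintype ι] [Fintype κ] [DecidableEq κ] [CommRing R]
  {z : ι → κ} {x : ι → R}

lemma dotProduct_comp_eq_zero_of_sum_fiber_eq_zero
    (hx : ∀ k, ∑ i with z i = k, x i = 0) (g : κ → R) : x ⬝ᵥ (g ∘ z) = 0 := by
  calc x ⬝ᵥ (g ∘ z) = ∑ k, ∑ i with z i = k, x i * g (z i) :=
        (Finset.sum_fiberwise Finset.univ z _).symm
    _ = ∑ k, (∑ i with z i = k, x i) * g k := by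
        refine Finset.sum_congr rfl fun k _ => ?_
        rw [Finset.sum_mul]
        refine Finset.sum_congr rfl fun i hi => ?_
        rw [(Finset.mem_filter.mp hi).2]
    _ = 0 := by simp [hx]

lemma dotProduct_mulVec_of_row_fiber_eq_zero
    (hx : ∀ k, ∑ i with z i = k, x i = 0) (P : κ → ι → R) :
    x ⬝ᵥ (of fun i j => P (z i) j) *ᵥ x = 0 :=
  dotProduct_comp_eq_zero_of_sum_fiber_eq_zero hx fun k => ∑ j, P k j * x j

lemma dotProduct_mulVec_of_col_fiber_eq_zero
    (hx : ∀ k, ∑ i with z i = k, x i = 0) (Q : ι → κ → R) :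
    x ⬝ᵥ (of fun i j => Q i (z j)) *ᵥ x = 0 := by
  rw [dotProduct_mulVec, dotProduct_comm]
  exact dotProduct_comp_eq_zero_of_sum_fiber_eq_zero hx fun k => ∑ i, x i * Q i k

end FiberwiseZero

def lamRowTerm {n r : ℕ} (A : Matrix (Fin n) (Fin n) ℝ) (z : Fin n → Fin r) (β : ℝ)
    (k : Fin r) (j : Fin n) : ℝ :=
  if z j = k then alpha A z β j
  else (∑ i ∈ cluster z k, A i j) / (csize z k : ℝ)
    - blocksum A z k (z j) / ((csize z k : ℝ) * (csize z (z j) : ℝ))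

def lamColTerm {n r : ℕ} (A : Matrix (Fin n) (Fin n) ℝ) (z : Fin n → Fin r) (β : ℝ)
    (i : Fin n) (ℓ : Fin r) : ℝ :=
  if z i = ℓ then alpha A z β i
  else (∑ j ∈ cluster z ℓ, A i j) / (csize z ℓ : ℝ)

lemma Lam_eq_smul_one_sub_add_add {n r : ℕ} (A : Matrix (Fin n) (Fin n) ℝ)
    (z : Fin n → Fin r) (β : ℝ) :
    Lam A z β = β • 1 - A + (of fun i j => lamRowTerm A z β (z i) j)
      + (of fun i j => lamColTerm A z β i (z j)) := by
  ext i j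
  simp only [Lam, lamRowTerm, lamColTerm, of_apply, Matrix.add_apply, Matrix.sub_apply,
    Matrix.smul_apply, one_apply, smul_eq_mul, eq_comm (a := z j)]
  split_ifs with h hij hij <;> first | (subst hij; exact absurd rfl h) | ring

theorem quadratic_form_of_Lam (n r : ℕ)
    (z : Fin n → Fin r)
    (A : Matrix (Fin n) (Fin n) ℝ) (β : ℝ) :
    ∀ u : Fin n → ℝ, (∀ k : Fin r, ∑ i ∈ cluster z k, u i = 0) →
      u ⬝ᵥ (Lam A z β).mulVec u = β * (∑ i, u i ^ 2) - u ⬝ᵥ A.mulVec u := by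
  intro u hu
  have hrow := dotProduct_mulVec_of_row_fiber_eq_zero hu (lamRowTerm A z β)
  have hcol := dotProduct_mulVec_of_col_fiber_eq_zero hu (lamColTerm A z β)
  rw [Lam_eq_smul_one_sub_add_add, add_mulVec, add_mulVec, sub_mulVec, dotProduct_add,
    dotProduct_add, dotProduct_sub, hrow, hcol, smul_mulVec, one_mulVec, dotProduct_smul,
    smul_eq_mul, add_zero, add_zero]
  simp only [dotProduct, sq]
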